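/- arXiv:2309.05029 — 4 statements merged into one kernel-verified Lean document; each statement's English description precedes it below -/
import Mathlib

section
/- The map T : X → X defined by T(y₀,y₁) = (−y₀, ξ ↦ −y₀ − ∫_ξ^0 y₁(s) ds) is a bounded linear operator; for every y ∈ X one has Ty ∈ D(Ã) and Ã(Ty) = y, and for every x ∈ D(Ã) one has T(Ãx) = x. Hence T is a linear bijection of X onto D(Ã) and T = Ã⁻¹. -/
open MeasureTheory Set
open scoped RealInnerProductSpace ENNReal

noncomputable section

/-- The "present" space `ℝⁿ`. -/
abbrev En (n : ℕ) := EuclideanSpace ℝ (Fin n)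

/-- Lebesgue measure restricted to `[-d, 0]`. -/
def muD (d : ℝ) : Measure ℝ := volume.restrict (Icc (-d) 0)

/-- The Hilbert space `X = ℝⁿ × L²([-d,0];ℝⁿ)` with the Hilbertian product norm. -/
abbrev Xsp (d : ℝ) (n : ℕ) := WithLp 2 (En n × Lp (En n) 2 (muD d))

/-- First (present) component of an element of `X`. -/
def fstX {d : ℝ} {n : ℕ} (x : Xsp d n) : En n := (WithLp.equiv 2 _ x).1

/-- Second (past) component of an element of `X`. -/
def sndX {d : ℝ} {n : ℕ} (x : Xsp d n) : Lp (En n) 2 (muD d) := (WithLp.equiv 2 _ x).2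

/-- `T` acts by `T(y₀,y₁) = (-y₀, ξ ↦ -y₀ - ∫_ξ^0 y₁(s) ds)`. -/
def SpecT (d : ℝ) (n : ℕ) (T : Xsp d n →L[ℝ] Xsp d n) : Prop :=
  ∀ y : Xsp d n,
    fstX (T y) = -fstX y ∧
    (sndX (T y) : ℝ → En n) =ᵐ[muD d]
      fun ξ => -fstX y - ∫ s in ξ..0, (sndX y : ℝ → En n) s

/-- `(g, g')` is a `W^{1,2}` representative pair on `[-d,0]`: `g` is absolutely
continuous with a.e. derivative `g' ∈ L²([-d,0];ℝⁿ)`. -/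
def IsW12 (d : ℝ) {n : ℕ} (g g' : ℝ → En n) : Prop :=
  MemLp g' 2 (muD d) ∧ ∀ ξ ∈ Icc (-d) 0, g ξ = g (-d) + ∫ s in (-d)..ξ, g' s

/-- The domain `D(Ã)` of the delay operator. -/
def domA (d : ℝ) (n : ℕ) : Set (Xsp d n) :=
  {x | ∃ g g' : ℝ → En n, IsW12 d g g' ∧ g 0 = fstX x ∧ (sndX x : ℝ → En n) =ᵐ[muD d] g}

/-!
`T` is assembled from bounded pieces: `y ↦ -y₀`, the constant embedding `ℝⁿ → L²`, and the
primitive operator `f ↦ (ξ ↦ ∫_ξ^b f)` on `L^p([a, b])` (here `[a, b] = [-d, 0]`), which is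
bounded because `|∫_ξ^b f| ≤ ‖f‖_{L¹}` uniformly in `ξ`. The identities `Ã (T y) = y` and
`T (Ã x) = x` are the two halves of the fundamental theorem of calculus for absolutely continuous
functions. For injectivity, `T y = 0` forces `y₀ = 0` and makes the continuous primitive of `y₁`
vanish on `[-d, 0]`; Lebesgue's differentiation theorem then gives `y₁ = 0` a.e.
-/

open Filter Function
open scoped Topology

section Primitive

variable {E : Type*} [NormedAddCommGroup E] {a b : ℝ} {p : ℝ≥0∞} [Fact (1 ≤ p)]

theorem intervalIntegrable_of_integrableOn_Icc {f : ℝ → E} (hf : IntegrableOn f (Icc a b))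
    {x y : ℝ} (hx : x ∈ Icc a b) (hy : y ∈ Icc a b) : IntervalIntegrable f volume x y :=
  (hf.mono_set (uIcc_subset_Icc hx hy)).intervalIntegrable

theorem Lp.integrableOn_Icc (f : Lp E p (volume.restrict (Icc a b))) :
    IntegrableOn f (Icc a b) :=
  (Lp.memLp f).integrable Fact.out

theorem Lp.integral_norm_le {α : Type*} [MeasurableSpace α] {μ : Measure α} [IsFiniteMeasure μ]
    (f : Lp E p μ) : ∫ x, ‖f x‖ ∂μ ≤ (μ univ ^ (1 - p.toReal⁻¹)).toReal * ‖f‖ := by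
  have hexp : 0 ≤ 1 - p.toReal⁻¹ := by
    rcases eq_or_ne p ∞ with rfl | hp
    · simp
    · exact sub_nonneg.2 <| inv_le_one_of_one_le₀ <| by
        simpa using ENNReal.toReal_mono hp (Fact.out : 1 ≤ p)
  have hL1 : eLpNorm f 1 μ ≤ eLpNorm f p μ * μ univ ^ (1 - p.toReal⁻¹) := by
    simpa using
      eLpNorm_le_eLpNorm_mul_rpow_measure_univ (Fact.out : 1 ≤ p) (Lp.aestronglyMeasurable f)
  rw [integral_norm_eq_lintegral_enorm (Lp.aestronglyMeasurable f),
    ← eLpNorm_one_eq_lintegral_enorm, Lp.norm_def, mul_comm, ← ENNReal.toReal_mul]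
  exact ENNReal.toReal_mono (ENNReal.mul_ne_top (Lp.eLpNorm_ne_top f)
    (ENNReal.rpow_ne_top_of_nonneg hexp (measure_ne_top μ univ))) hL1

variable [NormedSpace ℝ E]

theorem intervalIntegral_congr_of_ae_restrict_Icc {f g : ℝ → E}
    (h : f =ᵐ[volume.restrict (Icc a b)] g) {x y : ℝ} (hx : x ∈ Icc a b) (hy : y ∈ Icc a b) :
    ∫ s in x..y, f s = ∫ s in x..y, g s :=
  intervalIntegral.integral_congr_ae_restrict <|
    ae_restrict_of_ae_restrict_of_subset (uIoc_subset_uIcc.trans (uIcc_subset_Icc hx hy)) h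

theorem continuousOn_primitive_Icc_left {f : ℝ → E} (hf : IntegrableOn f (Icc a b)) :
    ContinuousOn (fun ξ => ∫ s in ξ..b, f s) (Icc a b) := by
  rcases le_or_gt a b with hab | hba
  · rw [← uIcc_of_le hab] at hf ⊢
    exact intervalIntegral.continuousOn_primitive_interval_left hf
  · simp [Icc_eq_empty_of_lt hba]

theorem norm_primitive_left_le {f : ℝ → E} (hf : IntegrableOn f (Icc a b)) {ξ : ℝ}
    (hξ : ξ ∈ Icc a b) : ‖∫ s in ξ..b, f s‖ ≤ ∫ s in Icc a b, ‖f s‖ :=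
  intervalIntegral.norm_integral_le_integral_norm_uIoc.trans <|
    setIntegral_mono_set hf.norm (ae_of_all _ fun _ => norm_nonneg _) <|
      (uIoc_subset_uIcc.trans (uIcc_subset_Icc hξ (right_mem_Icc.2 (hξ.1.trans hξ.2)))).eventuallyLE

theorem memLp_primitive_left {f : ℝ → E} (hf : IntegrableOn f (Icc a b)) (p : ℝ≥0∞) :
    MemLp (fun ξ => ∫ s in ξ..b, f s) p (volume.restrict (Icc a b)) :=
  MemLp.of_bound ((continuousOn_primitive_Icc_left hf).aestronglyMeasurable measurableSet_Icc) _ <|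
    (ae_restrict_iff' measurableSet_Icc).2 <| ae_of_all _ fun _ => norm_primitive_left_le hf

theorem ae_eq_zero_of_primitive_left_ae_eq_zero [CompleteSpace E] (hab : a < b) {f : ℝ → E}
    (hf : IntegrableOn f (Icc a b))
    (h : (fun ξ => ∫ s in ξ..b, f s) =ᵐ[volume.restrict (Icc a b)] 0) :
    f =ᵐ[volume.restrict (Icc a b)] 0 := by
  have hprim : EqOn (fun ξ => ∫ s in ξ..b, f s) 0 (Icc a b) :=
    Measure.eqOn_Icc_of_ae_eq volume hab.ne h (continuousOn_primitive_Icc_left hf)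
      continuousOn_const
  have hf' : IntervalIntegrable f volume a b := (uIcc_of_le hab.le ▸ hf).intervalIntegrable
  have hne_a : ∀ᵐ x, x ≠ a := by simp [ae_iff, measure_singleton]
  have hne_b : ∀ᵐ x, x ≠ b := by simp [ae_iff, measure_singleton]
  rw [EventuallyEq, ae_restrict_iff' measurableSet_Icc]
  filter_upwards [hf'.ae_hasDerivAt_integral, hne_a, hne_b] with x hderiv hxa hxb hx
  have hzero : (fun y => ∫ t in b..y, f t) =ᶠ[𝓝 x] fun _ => 0 := by
    filter_upwards [Ioo_mem_nhds (hx.1.lt_of_ne' hxa) (hx.2.lt_of_ne hxb)] with y hy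
    rw [intervalIntegral.integral_symm, neg_eq_zero]
    exact hprim (Ioo_subset_Icc_self hy)
  exact ((hderiv (uIcc_of_le hab.le ▸ hx) b right_mem_uIcc).congr_of_eventuallyEq
    hzero.symm).unique (hasDerivAt_const x 0)

variable (a b p) in
def Lp.primitiveₗ :
    Lp E p (volume.restrict (Icc a b)) →ₗ[ℝ] Lp E p (volume.restrict (Icc a b)) where
  toFun f := (memLp_primitive_left (Lp.integrableOn_Icc f) p).toLp _
  map_add' f g := by
    rw [← MemLp.toLp_add]
    refine MemLp.toLp_congr _ _ ?_
    filter_upwards [ae_restrict_mem measurableSet_Icc] with ξ hξ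
    have hb : b ∈ Icc a b := right_mem_Icc.2 (hξ.1.trans hξ.2)
    rw [intervalIntegral_congr_of_ae_restrict_Icc (Lp.coeFn_add f g) hξ hb]
    exact intervalIntegral.integral_add
      (intervalIntegrable_of_integrableOn_Icc (Lp.integrableOn_Icc f) hξ hb)
      (intervalIntegrable_of_integrableOn_Icc (Lp.integrableOn_Icc g) hξ hb)
  map_smul' c f := by
    rw [RingHom.id_apply, ← MemLp.toLp_const_smul]
    refine MemLp.toLp_congr _ _ ?_
    filter_upwards [ae_restrict_mem measurableSet_Icc] with ξ hξ
    have hb : b ∈ Icc a b := right_mem_Icc.2 (hξ.1.trans hξ.2)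
    rw [intervalIntegral_congr_of_ae_restrict_Icc (Lp.coeFn_smul c f) hξ hb]
    exact intervalIntegral.integral_smul c _

theorem Lp.norm_primitiveₗ_le (f : Lp E p (volume.restrict (Icc a b))) :
    ‖Lp.primitiveₗ a b p f‖ ≤ (measureUnivNNReal (volume.restrict (Icc a b)) ^ p.toReal⁻¹ *
      ((volume.restrict (Icc a b)) univ ^ (1 - p.toReal⁻¹)).toReal) * ‖f‖ :=
  calc ‖Lp.primitiveₗ a b p f‖
      ≤ measureUnivNNReal (volume.restrict (Icc a b)) ^ p.toReal⁻¹ * ∫ s in Icc a b, ‖f s‖ := by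
        refine Lp.norm_le_of_ae_bound (integral_nonneg fun _ => norm_nonneg _) ?_
        filter_upwards [MemLp.coeFn_toLp (memLp_primitive_left (Lp.integrableOn_Icc f) p),
          ae_restrict_mem measurableSet_Icc] with ξ hf hξ
        rw [Lp.primitiveₗ, LinearMap.coe_mk, AddHom.coe_mk, hf]
        exact norm_primitive_left_le (Lp.integrableOn_Icc f) hξ
    _ ≤ _ := by
        rw [mul_assoc]
        gcongr
        exact Lp.integral_norm_le f

variable (a b p) in
def Lp.primitiveL : Lp E p (volume.restrict (Icc a b)) →L[ℝ] Lp E p (volume.restrict (Icc a b)) :=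
  (Lp.primitiveₗ a b p).mkContinuous _ Lp.norm_primitiveₗ_le

theorem Lp.coeFn_primitiveL (f : Lp E p (volume.restrict (Icc a b))) :
    Lp.primitiveL a b p f =ᵐ[volume.restrict (Icc a b)] fun ξ => ∫ s in ξ..b, f s :=
  MemLp.coeFn_toLp (memLp_primitive_left (Lp.integrableOn_Icc f) p)

end Primitive

section Delay

variable {d : ℝ} {n : ℕ}

instance (d : ℝ) : IsFiniteMeasure (muD d) := by
  unfold muD
  infer_instance

theorem Xsp.ext {x y : Xsp d n} (h₀ : fstX x = fstX y) (h₁ : sndX x = sndX y) : x = y :=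
  (WithLp.equiv 2 _).injective (Prod.ext h₀ h₁)

theorem IsW12.integral_eq_sub {g g' : ℝ → En n} (hW : IsW12 d g g') {ξ : ℝ}
    (hξ : ξ ∈ Icc (-d) 0) : ∫ s in ξ..0, g' s = g 0 - g ξ := by
  have h0 : (0 : ℝ) ∈ Icc (-d) 0 := right_mem_Icc.2 (hξ.1.trans hξ.2)
  have hint := hW.1.integrable (by norm_num)
  rw [hW.2 0 h0, hW.2 ξ hξ, add_sub_add_left_eq_sub, intervalIntegral.integral_interval_sub_left
    (intervalIntegrable_of_integrableOn_Icc hint (left_mem_Icc.2 (hξ.1.trans hξ.2)) h0)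
    (intervalIntegrable_of_integrableOn_Icc hint (left_mem_Icc.2 (hξ.1.trans hξ.2)) hξ)]

theorem isW12_const_sub_primitive (c : En n) {f : ℝ → En n} (hf : MemLp f 2 (muD d)) :
    IsW12 d (fun ξ => c - ∫ s in ξ..0, f s) f := by
  refine ⟨hf, fun ξ hξ => ?_⟩
  have hd : -d ∈ Icc (-d) 0 := left_mem_Icc.2 (hξ.1.trans hξ.2)
  have hint := hf.integrable (by norm_num)
  dsimp only
  rw [← intervalIntegral.integral_interval_sub_left
    (intervalIntegrable_of_integrableOn_Icc hint hd (right_mem_Icc.2 (hξ.1.trans hξ.2)))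
    (intervalIntegrable_of_integrableOn_Icc hint hd hξ)]
  abel

variable (d n) in
def delayInverse : Xsp d n →L[ℝ] Xsp d n :=
  let fst := ContinuousLinearMap.fst ℝ (En n) (Lp (En n) 2 (muD d))
  let snd := ContinuousLinearMap.snd ℝ (En n) (Lp (En n) 2 (muD d))
  let V : Lp (En n) 2 (muD d) →L[ℝ] Lp (En n) 2 (muD d) := Lp.primitiveL (-d) 0 2
  (WithLp.prodContinuousLinearEquiv 2 ℝ (En n) (Lp (En n) 2 (muD d))).symm.toContinuousLinearMap ∘L
    ((-fst).prod (-(Lp.constL 2 (muD d) ℝ ∘L fst) - V ∘L snd)) ∘L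
    (WithLp.prodContinuousLinearEquiv 2 ℝ _ _).toContinuousLinearMap

theorem fstX_delayInverse (y : Xsp d n) : fstX (delayInverse d n y) = -fstX y := rfl

theorem delayInverse_spec : SpecT d n (delayInverse d n) := fun y => by
  refine ⟨rfl, ?_⟩
  filter_upwards [Lp.coeFn_sub (-Lp.const 2 (muD d) (fstX y)) (Lp.primitiveL (-d) 0 2 (sndX y)),
    Lp.coeFn_neg (Lp.const 2 (muD d) (fstX y)), Lp.coeFn_const 2 (muD d) (fstX y),
    Lp.coeFn_primitiveL (sndX y)] with ξ h₁ h₂ h₃ h₄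
  refine h₁.trans ?_
  rw [Pi.sub_apply, h₂, Pi.neg_apply, h₃]
  exact congrArg (-fstX y - ·) h₄

theorem delayInverse_injective (hd : 0 < d) : Injective (delayInverse d n) := by
  refine (injective_iff_map_eq_zero _).2 fun y hy => ?_
  have hy₀ : fstX y = 0 := neg_eq_zero.1 ((fstX_delayInverse y).symm.trans (congrArg fstX hy))
  have hprim : (fun ξ => ∫ s in ξ..0, (sndX y : ℝ → En n) s) =ᵐ[muD d] 0 := by
    have hsnd : sndX (delayInverse d n y) = 0 := by rw [hy]; rfl
    filter_upwards [(delayInverse_spec y).2, Lp.eq_zero_iff_ae_eq_zero.1 hsnd] with ξ h₁ h₂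
    rw [h₂, hy₀, neg_zero, zero_sub, Pi.zero_apply] at h₁
    exact neg_eq_zero.1 h₁.symm
  exact Xsp.ext hy₀ (Lp.eq_zero_iff_ae_eq_zero.2
    (ae_eq_zero_of_primitive_left_ae_eq_zero (by linarith) (Lp.integrableOn_Icc _) hprim))

theorem exists_isW12_delayInverse (y : Xsp d n) :
    ∃ g g' : ℝ → En n, IsW12 d g g' ∧ g 0 = fstX (delayInverse d n y) ∧
      (sndX (delayInverse d n y) : ℝ → En n) =ᵐ[muD d] g ∧
      -fstX (delayInverse d n y) = fstX y ∧ (sndX y : ℝ → En n) =ᵐ[muD d] g' :=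
  ⟨_, _, isW12_const_sub_primitive (-fstX y) (Lp.memLp (sndX y)),
    by simp [fstX_delayInverse], (delayInverse_spec y).2, neg_neg _, .rfl⟩

theorem delayInverse_eq_of_isW12 {x z : Xsp d n} {g g' : ℝ → En n} (hW : IsW12 d g g')
    (hg₀ : g 0 = fstX x) (hx : (sndX x : ℝ → En n) =ᵐ[muD d] g) (hz₀ : fstX z = -fstX x)
    (hz₁ : (sndX z : ℝ → En n) =ᵐ[muD d] g') : delayInverse d n z = x := by
  refine Xsp.ext (by rw [fstX_delayInverse, hz₀, neg_neg]) (Lp.ext ?_)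
  filter_upwards [(delayInverse_spec z).2, hx, ae_restrict_mem measurableSet_Icc] with ξ hTz hxξ hξ
  have h0 : (0 : ℝ) ∈ Icc (-d) 0 := right_mem_Icc.2 (hξ.1.trans hξ.2)
  rw [hTz, hxξ, intervalIntegral_congr_of_ae_restrict_Icc hz₁ hξ h0, hW.integral_eq_sub hξ, hz₀,
    neg_neg, ← hg₀]
  abel

theorem range_delayInverse : range (delayInverse d n) = domA d n := by
  refine Subset.antisymm ?_ fun x ⟨g, g', hW, hg₀, hx⟩ => ?_
  · rintro _ ⟨y, rfl⟩
    obtain ⟨g, g', hW, hg₀, hTy, -⟩ := exists_isW12_delayInverse y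
    exact ⟨g, g', hW, hg₀, hTy⟩
  · exact ⟨WithLp.toLp 2 (-fstX x, hW.1.toLp g'),
      delayInverse_eq_of_isW12 hW hg₀ hx rfl (MemLp.coeFn_toLp hW.1)⟩

end Delay

/-- **`T` is a bounded linear inverse of the delay operator `Ã`.**
The map `T(y₀,y₁) = (-y₀, ξ ↦ -y₀ - ∫_ξ^0 y₁(s) ds)` is a bounded linear operator on `X`;
for every `y ∈ X` one has `Ty ∈ D(Ã)` and `Ã(Ty) = y`; for every `x ∈ D(Ã)` one has
`T(Ãx) = x`. Hence `T` is a linear bijection of `X` onto `D(Ã)`, i.e. `T = Ã⁻¹`. -/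
theorem delay_operator_inverse (d : ℝ) (hd : 0 < d) (n : ℕ) :
    ∃ T : Xsp d n →L[ℝ] Xsp d n, SpecT d n T ∧
      -- `T y ∈ D(Ã)` with `Ã (T y) = y` for every `y`:
      (∀ y : Xsp d n, T y ∈ domA d n ∧
        ∃ g g' : ℝ → En n, IsW12 d g g' ∧ g 0 = fstX (T y) ∧
          (sndX (T y) : ℝ → En n) =ᵐ[muD d] g ∧
          -fstX (T y) = fstX y ∧ (sndX y : ℝ → En n) =ᵐ[muD d] g') ∧
      -- `T (Ã x) = x` for every `x ∈ D(Ã)`: if `(g,g')` is a `W^{1,2}` representative of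
      -- `x ∈ D(Ã)` and `z = Ã x = (-x₀, g')`, then `T z = x`:
      (∀ x z : Xsp d n, ∀ g g' : ℝ → En n, IsW12 d g g' → g 0 = fstX x →
        (sndX x : ℝ → En n) =ᵐ[muD d] g →
        fstX z = -fstX x → (sndX z : ℝ → En n) =ᵐ[muD d] g' → T z = x) ∧
      -- `T` is a linear bijection of `X` onto `D(Ã)`:
      Function.Injective T ∧ Set.range T = domA d n :=
  ⟨delayInverse d n, delayInverse_spec,
    fun y => ⟨range_delayInverse ▸ mem_range_self y, exists_isW12_delayInverse y⟩,
    fun _ _ _ _ => delayInverse_eq_of_isW12,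
    delayInverse_injective hd, range_delayInverse⟩
end
end

section
/- The bounded linear operator T : X → X, T(y₀,y₁) = (−y₀, ξ ↦ −y₀ − ∫_ξ^0 y₁(s) ds), is a compact operator. -/
open MeasureTheory Set
open scoped RealInnerProductSpace ENNReal

noncomputable section

/-! Cauchy–Schwarz gives `‖∫_ξ^ξ' y₁‖ ≤ √|ξ - ξ'| ‖y₁‖`, so `T` maps the unit ball of `X` into
pairs `(y₀, f)` with `y₀` in a ball of `ℝⁿ` and `f` continuous on `[-d, 0]`, uniformly bounded and
with common modulus of continuity `√·`. By Arzelà–Ascoli such `f` form a relatively compact set in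
`C([-d, 0])`, which embeds continuously into `L²`. -/

open Filter Topology Interval BoundedContinuousFunction

theorem MeasureTheory.L2.norm_setIntegral_le {α E : Type*} [MeasurableSpace α] {μ : Measure α}
    [NormedAddCommGroup E] [InnerProductSpace ℝ E] [CompleteSpace E] (f : Lp E 2 μ)
    {s : Set α} (hs : MeasurableSet s) (hμs : μ s ≠ ∞) :
    ‖∫ x in s, f x ∂μ‖ ≤ √(μ.real s) * ‖f‖ := by
  set c := ∫ x in s, f x ∂μ
  have hind : ‖indicatorConstLp 2 hs hμs c‖ = ‖c‖ * √(μ.real s) := by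
    rw [norm_indicatorConstLp two_ne_zero ENNReal.ofNat_ne_top, Real.sqrt_eq_rpow]
    norm_num
  have key : ‖c‖ * ‖c‖ ≤ ‖c‖ * (√(μ.real s) * ‖f‖) := by
    calc ‖c‖ * ‖c‖ = ⟪indicatorConstLp 2 hs hμs c, f⟫ := by
          rw [L2.inner_indicatorConstLp_eq_inner_setIntegral ℝ hs hμs c f,
            real_inner_self_eq_norm_mul_norm]
      _ ≤ ‖indicatorConstLp 2 hs hμs c‖ * ‖f‖ := real_inner_le_norm _ _
      _ = ‖c‖ * (√(μ.real s) * ‖f‖) := by rw [hind, mul_assoc]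
  rcases (norm_nonneg c).eq_or_lt with hc | hc
  · rw [← hc]; positivity
  · exact le_of_mul_le_mul_left key hc

theorem BoundedContinuousFunction.isCompact_closure_of_norm_le_of_continuity_modulus
    {α E : Type*} [MetricSpace α] [CompactSpace α] [NormedAddCommGroup E] [ProperSpace E]
    (C : ℝ) (b : ℝ → ℝ) (hb : Tendsto b (𝓝 0) (𝓝 0)) :
    IsCompact (closure {f : α →ᵇ E | (∀ x, ‖f x‖ ≤ C) ∧ ∀ x y, dist (f x) (f y) ≤ b (dist x y)}) :=
  arzela_ascoli (Metric.closedBall 0 C) (isCompact_closedBall 0 C) _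
    (fun _ x hf => mem_closedBall_zero_iff.2 (hf.1 x))
    (Metric.equicontinuous_of_continuity_modulus b hb _ fun x y f => f.2.2 x y)

section

variable {d : ℝ} {n : ℕ}

instance : IsFiniteMeasure (muD d) := by
  rw [muD]; infer_instance

lemma muD_restrict_of_subset {s : Set ℝ} (hs : MeasurableSet s) (h : s ⊆ Icc (-d) 0) :
    (muD d).restrict s = volume.restrict s := by
  rw [muD, Measure.restrict_restrict hs, inter_eq_left.2 h]

lemma intervalIntegrable_of_mem_Icc (w : Lp (En n) 2 (muD d)) {a b : ℝ}
    (ha : a ∈ Icc (-d) 0) (hb : b ∈ Icc (-d) 0) : IntervalIntegrable w volume a b := by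
  rw [intervalIntegrable_iff, IntegrableOn,
    ← muD_restrict_of_subset measurableSet_uIoc (uIoc_subset_uIcc.trans (uIcc_subset_Icc ha hb))]
  exact integrableOn_Lp_of_measure_ne_top w one_le_two (measure_ne_top _ _)

lemma norm_intervalIntegral_le (w : Lp (En n) 2 (muD d)) {a b : ℝ}
    (ha : a ∈ Icc (-d) 0) (hb : b ∈ Icc (-d) 0) :
    ‖∫ s in a..b, w s‖ ≤ √|b - a| * ‖w‖ := by
  have hsub : Ι a b ⊆ Icc (-d) 0 := uIoc_subset_uIcc.trans (uIcc_subset_Icc ha hb)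
  have hvol : (muD d).real (Ι a b) = |b - a| := by
    rw [measureReal_def, muD, Measure.restrict_apply measurableSet_uIoc, inter_eq_left.2 hsub,
      Real.volume_uIoc, ENNReal.toReal_ofReal (abs_nonneg _)]
  rw [intervalIntegral.norm_integral_eq_norm_integral_uIoc,
    ← muD_restrict_of_subset measurableSet_uIoc hsub, ← hvol]
  exact L2.norm_setIntegral_le w measurableSet_uIoc (measure_ne_top _ _)

lemma norm_fstX_le (y : Xsp d n) : ‖fstX y‖ ≤ ‖y‖ := WithLp.norm_fst_le _ y

lemma norm_sndX_le (y : Xsp d n) : ‖sndX y‖ ≤ ‖y‖ := WithLp.norm_snd_le _ y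

lemma dist_intervalIntegral_zero_le (w : Lp (En n) 2 (muD d)) {x x' : ℝ}
    (hx : x ∈ Icc (-d) 0) (hx' : x' ∈ Icc (-d) 0) :
    dist (∫ s in x..0, w s) (∫ s in x'..0, w s) ≤ √(dist x x') * ‖w‖ := by
  have h0 : (0 : ℝ) ∈ Icc (-d) 0 := ⟨hx.1.trans hx.2, le_rfl⟩
  rw [dist_eq_norm, ← intervalIntegral.integral_add_adjacent_intervals
    (intervalIntegrable_of_mem_Icc w hx hx') (intervalIntegrable_of_mem_Icc w hx' h0),
    add_sub_cancel_right, Real.dist_eq, abs_sub_comm]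
  exact norm_intervalIntegral_le w hx hx'

def pastProfile (h : -d ≤ 0) (y : Xsp d n) : Icc (-d) 0 →ᵇ En n :=
  mkOfCompact ⟨fun ξ => -fstX y - ∫ s in ξ..0, sndX y s, by
    have hcont := intervalIntegral.continuousOn_primitive_interval_left
      ((intervalIntegrable_iff').1 (intervalIntegrable_of_mem_Icc (sndX y) ⟨le_rfl, h⟩ ⟨h, le_rfl⟩))
    rw [uIcc_of_le h] at hcont
    exact continuous_const.sub (hcont.comp_continuous continuous_subtype_val Subtype.prop)⟩

lemma norm_pastProfile_le (h : -d ≤ 0) (y : Xsp d n) (ξ : Icc (-d) 0) :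
    ‖pastProfile h y ξ‖ ≤ (1 + √d) * ‖y‖ := by
  have hint : ‖∫ s in (ξ : ℝ)..0, sndX y s‖ ≤ √d * ‖y‖ := by
    refine (norm_intervalIntegral_le (sndX y) ξ.2 ⟨h, le_rfl⟩).trans ?_
    gcongr
    · rw [zero_sub, abs_neg, abs_of_nonpos ξ.2.2]; linarith [ξ.2.1]
    · exact norm_sndX_le y
  calc ‖pastProfile h y ξ‖ ≤ ‖fstX y‖ + ‖∫ s in (ξ : ℝ)..0, sndX y s‖ := by
        simpa [pastProfile, norm_neg] using norm_sub_le (-fstX y) (∫ s in (ξ : ℝ)..0, sndX y s)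
    _ ≤ (1 + √d) * ‖y‖ := by linarith [norm_fstX_le y]

lemma dist_pastProfile_le (h : -d ≤ 0) (y : Xsp d n) (ξ ξ' : Icc (-d) 0) :
    dist (pastProfile h y ξ) (pastProfile h y ξ') ≤ √(dist ξ ξ') * ‖y‖ := by
  simp only [pastProfile, mkOfCompact_apply, ContinuousMap.coe_mk, dist_sub_left, Subtype.dist_eq]
  refine (dist_intervalIntegral_zero_le (sndX y) ξ.2 ξ'.2).trans ?_
  gcongr
  exact norm_sndX_le y

def sqrtModulusBall (d C : ℝ) (n : ℕ) : Set (Icc (-d) 0 →ᵇ En n) :=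
  {f | (∀ ξ, ‖f ξ‖ ≤ C) ∧ ∀ ξ ξ', dist (f ξ) (f ξ') ≤ √(dist ξ ξ')}

lemma isCompact_closure_sqrtModulusBall (C : ℝ) : IsCompact (closure (sqrtModulusBall d C n)) :=
  isCompact_closure_of_norm_le_of_continuity_modulus C (√·)
    (by simpa using Real.continuous_sqrt.tendsto 0)

lemma pastProfile_mem_sqrtModulusBall (h : -d ≤ 0) {y : Xsp d n} (hy : ‖y‖ ≤ 1) :
    pastProfile h y ∈ sqrtModulusBall d (1 + √d) n :=
  ⟨fun ξ => (norm_pastProfile_le h y ξ).trans (mul_le_of_le_one_right (by positivity) hy),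
    fun ξ ξ' => (dist_pastProfile_le h y ξ ξ').trans (mul_le_of_le_one_right (by positivity) hy)⟩

def toX (h : -d ≤ 0) (z : En n × (Icc (-d) 0 →ᵇ En n)) : Xsp d n :=
  WithLp.toLp 2 (z.1, (z.2.compContinuous ⟨projIcc (-d) 0 h, continuous_projIcc⟩).toLp 2 (muD d) ℝ)

lemma continuous_toX (h : -d ≤ 0) : Continuous (toX (n := n) h) :=
  (WithLp.prod_continuous_toLp 2 _ _).comp (continuous_fst.prodMk
    ((BoundedContinuousFunction.toLp 2 (muD d) ℝ).continuous.comp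
      ((continuous_compContinuous _).comp continuous_snd)))

lemma toX_pastProfile (h : -d ≤ 0) {T : Xsp d n →L[ℝ] Xsp d n} (hT : SpecT d n T) (y : Xsp d n) :
    toX h (-fstX y, pastProfile h y) = T y := by
  rw [← show WithLp.toLp 2 (fstX (T y), sndX (T y)) = T y from rfl, toX]
  congr 2
  · exact (hT y).1.symm
  · refine Lp.ext ?_
    filter_upwards [BoundedContinuousFunction.coeFn_toLp (E := En n) 2 (muD d) ℝ _, (hT y).2,
      ae_restrict_mem measurableSet_Icc] with ξ hξ hTξ hmem
    rw [hξ, hTξ]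
    simp [pastProfile, projIcc_of_mem h hmem]

end

/-- **Compactness of `T = Ã⁻¹`.**
The bounded linear operator `T : X → X`, `T(y₀,y₁) = (-y₀, ξ ↦ -y₀ - ∫_ξ^0 y₁(s) ds)`,
is a compact operator. -/
theorem delay_operator_inverse_compact (d : ℝ) (hd : 0 < d) (n : ℕ)
    (T : Xsp d n →L[ℝ] Xsp d n) (hT : SpecT d n T) :
    IsCompactOperator T := by
  have h : -d ≤ 0 := by linarith
  refine ⟨toX h '' (Metric.closedBall 0 1 ×ˢ closure (sqrtModulusBall d (1 + √d) n)),
    ((isCompact_closedBall 0 1).prod (isCompact_closure_sqrtModulusBall _)).image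
      (continuous_toX h),
    mem_of_superset (Metric.closedBall_mem_nhds 0 one_pos) fun y hy => ?_⟩
  rw [mem_closedBall_zero_iff] at hy
  refine ⟨(-fstX y, pastProfile h y), ⟨?_, subset_closure (pastProfile_mem_sqrtModulusBall h hy)⟩,
    toX_pastProfile h hT y⟩
  rw [mem_closedBall_zero_iff, norm_neg]
  exact (norm_fstX_le y).trans hy
end
end

section
/- Let B := T* ∘ T, where T* is the Hilbert-space adjoint of T. Then B is self-adjoint, ⟨Bx, x⟩_X > 0 for every x ∈ X with x ≠ 0, and ⟨Tx, x⟩_X ≤ 0 for every x ∈ X. (Since Ã*B = Ã⁻¹ = T, the last inequality says ⟨Ã*Bx, x⟩_X ≤ 0, i.e. Ã satisfies the weak B-condition with constant C₀ = 0.) -/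
open MeasureTheory Set
open scoped RealInnerProductSpace ENNReal

noncomputable section

/-!
`B = T*T` is positive definite because `T` is injective: `T x = 0` forces `x₀ = 0` and makes
the primitive `ξ ↦ ∫_ξ^0 x₁` vanish almost everywhere, hence everywhere on `[-d, 0]` by
continuity, so `x₁ = 0` by Lebesgue's differentiation theorem. For the dissipativity of `T`,
put `A = ∫ x₁`; Fubini gives `∫ ⟪∫_ξ^0 x₁, x₁(ξ)⟫ dξ = ‖A‖² / 2`, whence
`⟪T x, x⟫ = -‖x₀‖² - ⟪x₀, A⟫ - ‖A‖² / 2 = -(‖x₀‖² + ‖x₀ + A‖²) / 2`.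
-/

open Filter
open scoped Topology

/- Fubini on the triangle `{ξ < s}`; the complementary triangle `{s < ξ}` gives the same
integral, and the diagonal is null because `μ` has no atoms. -/
theorem integral_inner_setIntegral_Ioi {E : Type*} [NormedAddCommGroup E]
    [InnerProductSpace ℝ E] [CompleteSpace E] {μ : Measure ℝ} [SFinite μ] [NullSingletonClass μ]
    {f : ℝ → E} (hf : Integrable f μ) :
    Integrable (fun ξ => ⟪∫ s in Ioi ξ, f s ∂μ, f ξ⟫) μ ∧
    2 * ∫ ξ, ⟪∫ s in Ioi ξ, f s ∂μ, f ξ⟫ ∂μ = ‖∫ s, f s ∂μ‖ ^ 2 := by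
  set A := ∫ s, f s ∂μ
  set K : ℝ → ℝ → ℝ := fun ξ s => (Ioi ξ).indicator (fun s => ⟪f s, f ξ⟫) s
  have hK : Integrable (Function.uncurry K) (μ.prod μ) := by
    refine Integrable.indicator (s := {p : ℝ × ℝ | p.1 < p.2}) ?_
      (measurableSet_lt measurable_fst measurable_snd)
    refine (hf.norm.mul_prod hf.norm).mono' (hf.1.comp_snd.inner hf.1.comp_fst)
      (.of_forall fun p => ?_)
    rw [mul_comm]
    exact norm_inner_le_norm _ _
  have hleft : ∀ ξ, ∫ s, K ξ s ∂μ = ⟪∫ s in Ioi ξ, f s ∂μ, f ξ⟫ := fun ξ => by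
    simp only [K, integral_indicator measurableSet_Ioi, real_inner_comm (f ξ)]
    exact integral_inner hf.integrableOn (f ξ)
  have hright : ∀ s, ∫ ξ, K ξ s ∂μ = ⟪A, f s⟫ - ⟪∫ ξ in Ioi s, f ξ ∂μ, f s⟫ := fun s => by
    have hsplit : ∫ ξ in Iio s, f ξ ∂μ = A - ∫ ξ in Ioi s, f ξ ∂μ := by
      rw [setIntegral_congr_set Ioi_ae_eq_Ici, eq_sub_iff_add_eq, ← compl_Iio]
      exact integral_add_compl measurableSet_Iio hf
    have hKs : (fun ξ => K ξ s) = (Iio s).indicator (fun ξ => ⟪f s, f ξ⟫) := by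
      ext ξ
      simp [K, indicator_apply]
    rw [hKs, integral_indicator measurableSet_Iio, integral_inner hf.integrableOn, hsplit,
      inner_sub_right, real_inner_comm A, real_inner_comm (∫ ξ in Ioi s, f ξ ∂μ)]
  have hint : Integrable (fun ξ => ⟪∫ s in Ioi ξ, f s ∂μ, f ξ⟫) μ := by
    simpa only [Function.uncurry_apply_pair, hleft] using hK.integral_prod_left
  refine ⟨hint, ?_⟩
  have hswap := integral_integral_swap hK
  simp only [hleft, hright] at hswap
  rw [integral_sub (hf.const_inner A) hint, integral_inner hf, real_inner_self_eq_norm_sq] at hswap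
  linarith

theorem ae_eq_zero_of_intervalIntegral_eq_zero {F : Type*} [NormedAddCommGroup F]
    [NormedSpace ℝ F] [CompleteSpace F] {f : ℝ → F} {a b : ℝ} (hab : a < b)
    (hf : IntegrableOn f (Icc a b))
    (h : (fun x => ∫ t in x..b, f t) =ᵐ[volume.restrict (Icc a b)] 0) :
    f =ᵐ[volume.restrict (Icc a b)] 0 := by
  have hf' : IntegrableOn f (uIcc a b) := by rwa [uIcc_of_le hab.le]
  have hzero : EqOn (fun x => ∫ t in x..b, f t) 0 (Icc a b) :=
    Measure.eqOn_Icc_of_ae_eq volume hab.ne h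
      (by simpa only [uIcc_of_le hab.le] using
        intervalIntegral.continuousOn_primitive_interval_left hf')
      continuousOn_const
  rw [← restrict_Ioo_eq_restrict_Icc]
  filter_upwards [ae_restrict_mem measurableSet_Ioo,
    ae_restrict_of_ae hf'.intervalIntegrable.ae_hasDerivAt_integral] with x hx hderiv
  have hloc : (fun y => ∫ t in b..y, f t) =ᶠ[𝓝 x] fun _ => 0 := by
    filter_upwards [Ioo_mem_nhds hx.1 hx.2] with y hy
    rw [intervalIntegral.integral_symm, neg_eq_zero]
    exact hzero (Ioo_subset_Icc_self hy)
  have hmem : x ∈ uIcc a b := by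
    rw [uIcc_of_le hab.le]
    exact Ioo_subset_Icc_self hx
  exact (hderiv hmem b right_mem_uIcc).unique ((hasDerivAt_const x 0).congr_of_eventuallyEq hloc)

instance inst_s5 (d : ℝ) : IsFiniteMeasure (muD d) := by
  unfold muD
  infer_instance

instance (d : ℝ) : NullSingletonClass (muD d) := by
  unfold muD
  infer_instance

theorem setIntegral_Ioi_muD {E : Type*} [NormedAddCommGroup E] [NormedSpace ℝ E] {d : ℝ}
    (f : ℝ → E) {ξ : ℝ} (hξ : ξ ∈ Icc (-d) 0) :
    ∫ s in Ioi ξ, f s ∂muD d = ∫ s in ξ..0, f s := by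
  have hset : Ioi ξ ∩ Icc (-d) 0 = Ioc ξ 0 := by
    ext s
    simp only [mem_inter_iff, mem_Ioi, mem_Icc, mem_Ioc]
    exact ⟨fun h => ⟨h.1, h.2.2⟩, fun h => ⟨h.1, by linarith [hξ.1], h.2⟩⟩
  rw [muD, Measure.restrict_restrict measurableSet_Ioi, hset,
    intervalIntegral.integral_of_le hξ.2]

theorem integrable_sndX {d : ℝ} {n : ℕ} (x : Xsp d n) : Integrable (sndX x : ℝ → En n) (muD d) :=
  (Lp.memLp (sndX x)).integrable one_le_two

theorem Xsp.eq_zero_of_fstX_of_sndX {d : ℝ} {n : ℕ} {x : Xsp d n} (h₀ : fstX x = 0)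
    (h₁ : sndX x = 0) : x = 0 :=
  (WithLp.equiv 2 _).injective (Prod.ext h₀ h₁)

namespace SpecT

variable {d : ℝ} {n : ℕ} {T : Xsp d n →L[ℝ] Xsp d n}

theorem eq_zero_of_apply_eq_zero (hd : 0 < d) (hT : SpecT d n T) {x : Xsp d n}
    (hx : T x = 0) : x = 0 := by
  obtain ⟨hfst, hsnd⟩ := hT x
  rw [hx] at hfst hsnd
  have hx₀ : fstX x = 0 := neg_eq_zero.1 hfst.symm
  have hprim : (fun ξ => ∫ s in ξ..0, (sndX x : ℝ → En n) s) =ᵐ[muD d] 0 := by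
    filter_upwards [hsnd, Lp.coeFn_zero (En n) 2 (muD d)] with ξ hT0 h0
    rw [show sndX (0 : Xsp d n) = 0 from rfl, h0, hx₀] at hT0
    simpa using hT0.symm
  refine Xsp.eq_zero_of_fstX_of_sndX hx₀ (Lp.eq_zero_iff_ae_eq_zero.2 ?_)
  exact ae_eq_zero_of_intervalIntegral_eq_zero (neg_lt_zero.2 hd) (integrable_sndX x) hprim

theorem inner_apply_self (hT : SpecT d n T) (x : Xsp d n) :
    ⟪T x, x⟫ = -(‖fstX x‖ ^ 2 + ‖fstX x + ∫ s, sndX x s ∂muD d‖ ^ 2) / 2 := by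
  obtain ⟨hfst, hsnd⟩ := hT x
  set f : ℝ → En n := (sndX x : ℝ → En n)
  obtain ⟨hint, hval⟩ := integral_inner_setIntegral_Ioi (integrable_sndX x)
  have hsnd' : ⟪sndX (T x), sndX x⟫
      = ∫ ξ, ⟪-fstX x, f ξ⟫ - ⟪∫ s in Ioi ξ, f s ∂muD d, f ξ⟫ ∂muD d := by
    rw [L2.inner_def]
    refine integral_congr_ae ?_
    filter_upwards [hsnd, ae_restrict_mem measurableSet_Icc] with ξ hξ hmem
    rw [hξ, setIntegral_Ioi_muD f hmem, inner_sub_left]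
  have hsplit : ⟪T x, x⟫ = ⟪fstX (T x), fstX x⟫ + ⟪sndX (T x), sndX x⟫ := rfl
  rw [hsplit, hsnd', integral_sub ((integrable_sndX x).const_inner _) hint,
    integral_inner (integrable_sndX x), hfst, inner_neg_left, inner_neg_left,
    real_inner_self_eq_norm_sq, norm_add_sq_real]
  linarith

end SpecT

/-- **The weak `B`-condition with `C₀ = 0`.**
Let `B := T* ∘ T` (characterized by `⟨Bx, y⟩ = ⟨Tx, Ty⟩` for all `x, y`). Then `B` is
self-adjoint, `⟨Bx, x⟩ > 0` for every `x ≠ 0`, and `⟨Tx, x⟩ ≤ 0` for every `x ∈ X`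
(since `Ã*B = Ã⁻¹ = T`, the latter says `⟨Ã*Bx, x⟩ ≤ 0`). -/
theorem weak_B_condition (d : ℝ) (hd : 0 < d) (n : ℕ)
    (T : Xsp d n →L[ℝ] Xsp d n) (hT : SpecT d n T)
    (B : Xsp d n →L[ℝ] Xsp d n)
    (hB : ∀ x y : Xsp d n, ⟪B x, y⟫ = ⟪T x, T y⟫) :
    (∀ x y : Xsp d n, ⟪B x, y⟫ = ⟪x, B y⟫) ∧
    (∀ x : Xsp d n, x ≠ 0 → 0 < ⟪B x, x⟫) ∧
    (∀ x : Xsp d n, ⟪T x, x⟫ ≤ 0) := by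
  refine ⟨fun x y => ?_, fun x hx => ?_, fun x => ?_⟩
  · rw [hB, real_inner_comm (B y), hB, real_inner_comm]
  · rw [hB, real_inner_self_eq_norm_sq]
    exact pow_pos (norm_pos_iff.2 fun h => hx (hT.eq_zero_of_apply_eq_zero hd h)) 2
  · rw [hT.inner_apply_self x]
    exact div_nonpos_of_nonpos_of_nonneg (neg_nonpos.2 (by positivity)) zero_le_two

end
end

section
/- Let n ∈ ℕ, R > 0, α ∈ (0,1] and C₀ > 0. Let f : ℝⁿ → ℝ be differentiable and satisfy the one-sided C^{1,α} bound f(x + t q) ≤ f(x) + t ∇f(x)·q + C₀ t^{1+α} for all x with |x| ≤ R, all unit vectors q and all t ∈ [0,1]. Let (f_k) be a sequence of convex differentiable functions ℝⁿ → ℝ such that sup_{|x| ≤ R+1} |f_k(x) − f(x)| → 0 as k → ∞. Then sup_{|x| ≤ R} |∇f_k(x) − ∇f(x)| → 0 as k → ∞. (Core of the proof that the gradients of the inf-convolutions V_ε converge uniformly to D_{x₀}V on bounded sets.) -/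
open Set Filter Topology
open scoped RealInnerProductSpace

/-!
Convexity of `f_k` gives the subgradient inequality `t ⟪∇f_k x, q⟫ ≤ f_k (x + t q) - f_k x`.
Replacing `f_k` by `f` up to the uniform error `δ_k` and using the one-sided `C^{1,α}` bound gives
`⟪∇f_k x - ∇f x, q⟫ ≤ C₀ t^α + 2 δ_k / t` for every unit `q`. Choosing the step `t` small first,
and then `k` so large that `δ_k / t` is small, bounds `‖∇f_k x - ∇f x‖` uniformly in `x`.
-/

theorem ConvexOn.le_sub_of_hasFDerivAt {E : Type*} [NormedAddCommGroup E] [NormedSpace ℝ E]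
    {s : Set E} {g : E → ℝ} {g' : E →L[ℝ] ℝ} {x v : E} (hg : ConvexOn ℝ s g) (hx : x ∈ s)
    (hxv : x + v ∈ s) (hd : HasFDerivAt g g' x) :
    g' v ≤ g (x + v) - g x := by
  let ℓ : ℝ →ᵃ[ℝ] E := AffineMap.lineMap x (x + v)
  have hℓ0 : ℓ 0 = x := AffineMap.lineMap_apply_zero _ _
  have hℓ1 : ℓ 1 = x + v := AffineMap.lineMap_apply_one _ _
  have hderiv : HasDerivAt (g ∘ ℓ) (g' v) 0 := by
    have := (hℓ0 ▸ hd).comp_hasDerivAt (0 : ℝ)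
      (AffineMap.hasDerivAt_lineMap (a := x) (b := x + v))
    simpa using this
  have hslope := (hg.comp_affineMap ℓ).le_slope_of_hasDerivAt
    (by simpa [hℓ0] using hx) (by simpa [hℓ1] using hxv) one_pos hderiv
  simpa [slope, hℓ0, hℓ1] using hslope

section InnerProductSpace

variable {E : Type*} [NormedAddCommGroup E] [InnerProductSpace ℝ E]

theorem norm_le_of_forall_inner_unit_le {v : E} {ε : ℝ} (hε : 0 ≤ ε)
    (h : ∀ q : E, ‖q‖ = 1 → ⟪v, q⟫ ≤ ε) : ‖v‖ ≤ ε := by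
  rcases eq_or_ne v 0 with rfl | hv
  · simpa using hε
  · have hunit : ‖‖v‖⁻¹ • v‖ = 1 := norm_smul_inv_norm hv
    simpa [real_inner_smul_right, real_inner_self_eq_norm_sq, sq, hv] using h _ hunit

variable [CompleteSpace E]

theorem ConvexOn.inner_gradient_le_sub {s : Set E} {g : E → ℝ} {x v : E} (hg : ConvexOn ℝ s g)
    (hx : x ∈ s) (hxv : x + v ∈ s) (hd : DifferentiableAt ℝ g x) :
    ⟪gradient g x, v⟫ ≤ g (x + v) - g x := by
  simpa using hg.le_sub_of_hasFDerivAt hx hxv (hasGradientAt_iff_hasFDerivAt.mp hd.hasGradientAt)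

theorem ConvexOn.inner_gradient_sub_le {g f : E → ℝ} {x v p : E} {δ ω : ℝ}
    (hg : ConvexOn ℝ univ g) (hd : DifferentiableAt ℝ g x)
    (hx : |g x - f x| ≤ δ) (hxv : |g (x + v) - f (x + v)| ≤ δ)
    (hf : f (x + v) ≤ f x + ⟪p, v⟫ + ω) :
    ⟪gradient g x - p, v⟫ ≤ ω + 2 * δ := by
  have hsub := hg.inner_gradient_le_sub (mem_univ x) (mem_univ (x + v)) hd
  rw [inner_sub_left]
  linarith [abs_le.mp hx, abs_le.mp hxv]

end InnerProductSpace

theorem exists_mem_Ioc_mul_rpow_le {α : ℝ} (hα : 0 < α) (C : ℝ) {ε : ℝ} (hε : 0 < ε) :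
    ∃ t ∈ Ioc (0 : ℝ) 1, C * t ^ α ≤ ε := by
  have hlim : Tendsto (fun t : ℝ => C * t ^ α) (𝓝[>] 0) (𝓝 0) := by
    have := ((Real.continuousAt_rpow_const 0 α (Or.inr hα.le)).tendsto.const_mul C).mono_left
      (nhdsWithin_le_nhds (s := Ioi 0))
    simpa [Real.zero_rpow hα.ne'] using this
  exact (Filter.Eventually.and (Ioc_mem_nhdsGT one_pos) (hlim.eventually (ge_mem_nhds hε))).exists

theorem gradient_convergence_of_convex_uniform_general
    (n : ℕ) (R : ℝ) (α : ℝ) (hα : α ∈ Ioc (0 : ℝ) 1) (C₀ : ℝ)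
    (f : EuclideanSpace ℝ (Fin n) → ℝ)
    (hfC1α : ∀ x : EuclideanSpace ℝ (Fin n), ‖x‖ ≤ R →
      ∀ q : EuclideanSpace ℝ (Fin n), ‖q‖ = 1 → ∀ t ∈ Icc (0 : ℝ) 1,
        f (x + t • q) ≤ f x + t * ⟪gradient f x, q⟫ + C₀ * t ^ (1 + α))
    (fk : ℕ → EuclideanSpace ℝ (Fin n) → ℝ)
    (hfkconv : ∀ k, ConvexOn ℝ univ (fk k))
    (hfkdiff : ∀ k, Differentiable ℝ (fk k))
    (hunif : ∀ ε > (0 : ℝ), ∃ N : ℕ, ∀ k ≥ N, ∀ x : EuclideanSpace ℝ (Fin n),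
      ‖x‖ ≤ R + 1 → |fk k x - f x| ≤ ε) :
    ∀ ε > (0 : ℝ), ∃ N : ℕ, ∀ k ≥ N, ∀ x : EuclideanSpace ℝ (Fin n),
      ‖x‖ ≤ R → ‖gradient (fk k) x - gradient f x‖ ≤ ε := by
  intro ε hε
  obtain ⟨t, ⟨ht0, ht1⟩, hCt⟩ := exists_mem_Ioc_mul_rpow_le hα.1 C₀ (half_pos hε)
  obtain ⟨N, hN⟩ := hunif (ε * t / 4) (by positivity)
  refine ⟨N, fun k hk x hx => norm_le_of_forall_inner_unit_le hε.le fun q hq => ?_⟩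
  have hxt : ‖x + t • q‖ ≤ R + 1 := calc
    ‖x + t • q‖ ≤ ‖x‖ + t := by simpa [norm_smul, hq, abs_of_pos ht0] using norm_add_le x (t • q)
    _ ≤ R + 1 := by linarith
  have hf : f (x + t • q) ≤ f x + ⟪gradient f x, t • q⟫ + t * (C₀ * t ^ α) := by
    have := hfC1α x hx q hq t ⟨ht0.le, ht1⟩
    rwa [Real.rpow_add ht0, Real.rpow_one, mul_left_comm, ← real_inner_smul_right] at this
  have hdir := (hfkconv k).inner_gradient_sub_le (hfkdiff k x)
    (hN k hk x (by linarith)) (hN k hk _ hxt) hf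
  rw [real_inner_smul_right] at hdir
  have hCt' : t * (C₀ * t ^ α) ≤ t * (ε / 2) := mul_le_mul_of_nonneg_left hCt ht0.le
  exact le_of_mul_le_mul_left (by linarith) ht0

/-- **Uniform convergence of gradients of convex approximations**
(core of Lemma 4.1 (iii), convergence `D_{x₀}V_ε → D_{x₀}V`).
If `f : ℝⁿ → ℝ` is differentiable with a one-sided `C^{1,α}` bound on the ball of radius
`R`, and `(f_k)` are convex differentiable functions converging uniformly to `f` on the
ball of radius `R+1`, then `∇f_k → ∇f` uniformly on the ball of radius `R`. -/
theorem gradient_convergence_of_convex_uniform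
    (n : ℕ) (R : ℝ) (hR : 0 < R) (α : ℝ) (hα : α ∈ Ioc (0 : ℝ) 1) (C₀ : ℝ) (hC₀ : 0 < C₀)
    (f : EuclideanSpace ℝ (Fin n) → ℝ) (hf : Differentiable ℝ f)
    (hfC1α : ∀ x : EuclideanSpace ℝ (Fin n), ‖x‖ ≤ R →
      ∀ q : EuclideanSpace ℝ (Fin n), ‖q‖ = 1 → ∀ t ∈ Icc (0 : ℝ) 1,
        f (x + t • q) ≤ f x + t * ⟪gradient f x, q⟫ + C₀ * t ^ (1 + α))
    (fk : ℕ → EuclideanSpace ℝ (Fin n) → ℝ)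
    (hfkconv : ∀ k, ConvexOn ℝ univ (fk k))
    (hfkdiff : ∀ k, Differentiable ℝ (fk k))
    (hunif : ∀ ε > (0 : ℝ), ∃ N : ℕ, ∀ k ≥ N, ∀ x : EuclideanSpace ℝ (Fin n),
      ‖x‖ ≤ R + 1 → |fk k x - f x| ≤ ε) :
    ∀ ε > (0 : ℝ), ∃ N : ℕ, ∀ k ≥ N, ∀ x : EuclideanSpace ℝ (Fin n),
      ‖x‖ ≤ R → ‖gradient (fk k) x - gradient f x‖ ≤ ε :=
  gradient_convergence_of_convex_uniform_general n R α hα C₀ f hfC1α fk hfkconv hfkdiff hunif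
end
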